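/- arXiv:2209.10313 — 2 statements merged into one kernel-verified Lean document; each statement's English description precedes it below -/
import Mathlib

section
/- For every acceptor A, the Kleene star A* satisfies: w ∈ L(A*) if and only if there exist k ≥ 0 and words w₁,...,w_k ∈ L(A) such that w = w₁w₂⋯w_k. -/
/-- A border function on a well-ordered alphabet, viewed as a finite set of ordered pairs
(a functional finite graph) that is defined at least for the minimal symbol `⊥`. -/
structure BorderFun (α : Type*) [LinearOrder α] [OrderBot α] (D : Type*) where
  graph : Finset (α × D)
  functional : ∀ p ∈ graph, ∀ q ∈ graph, p.1 = q.1 → p.2 = q.2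
  bot_mem : ∃ d, (⊥, d) ∈ graph

namespace BorderFun
open Classical

variable {α : Type*} [LinearOrder α] [OrderBot α] {D D' D₁ D₂ : Type*}

/-- The domain of a border function. -/
def dom (φ : BorderFun α D) : Finset α := φ.graph.image Prod.fst

lemma filter_nonempty (φ : BorderFun α D) (σ : α) :
    (φ.dom.filter (fun τ => τ ≤ σ)).Nonempty := by
  obtain ⟨d, hd⟩ := φ.bot_mem
  exact ⟨⊥, Finset.mem_filter.mpr ⟨Finset.mem_image.mpr ⟨(⊥, d), hd, rfl⟩, bot_le⟩⟩

/-- `σ^≤`: the greatest element of the domain that is `≤ σ`. -/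
def maxLe (φ : BorderFun α D) (σ : α) : α :=
  (φ.dom.filter (fun τ => τ ≤ σ)).max' (φ.filter_nonempty σ)

lemma exists_leVal (φ : BorderFun α D) (σ : α) : ∃ d, (φ.maxLe σ, d) ∈ φ.graph := by
  have h := Finset.max'_mem _ (φ.filter_nonempty σ)
  have h2 := (Finset.mem_filter.mp h).1
  obtain ⟨p, hp, hfst⟩ := Finset.mem_image.mp h2
  exact ⟨p.2, by rw [show φ.maxLe σ = p.1 from hfst.symm]; exact hp⟩

/-- `φ^≤(σ)`: the value of `φ` at the greatest domain element `≤ σ`. -/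
noncomputable def leVal (φ : BorderFun α D) (σ : α) : D :=
  Classical.choose (φ.exists_leVal σ)

/-- Two border functions are equivalent if they induce the same total function `φ^≤`. -/
def Equiv (φ ψ : BorderFun α D) : Prop := ∀ σ, φ.leVal σ = ψ.leVal σ

/-- The minimization of a border function: remove every border whose immediate
predecessor border carries the same value. -/
noncomputable def minimize (φ : BorderFun α D) : BorderFun α D where
  graph := φ.graph.filter (fun p => ∀ q ∈ φ.graph, q.1 < p.1 →
    (∀ r ∈ φ.graph, ¬(q.1 < r.1 ∧ r.1 < p.1)) → q.2 ≠ p.2)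
  functional := fun p hp q hq =>
    φ.functional p (Finset.mem_of_mem_filter p hp) q (Finset.mem_of_mem_filter q hq)
  bot_mem := by
    obtain ⟨d, hd⟩ := φ.bot_mem
    exact ⟨d, Finset.mem_filter.mpr ⟨hd, fun q hq hlt => absurd hlt (not_lt_bot)⟩⟩

/-- Pointwise application of a function to the values of a border function (without minimization). -/
noncomputable def map (f : D → D') (φ : BorderFun α D) : BorderFun α D' where
  graph := φ.graph.image (fun p => (p.1, f p.2))
  functional := by
    intro p hp q hq h
    obtain ⟨a, ha, rfl⟩ := Finset.mem_image.mp hp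
    obtain ⟨b, hb, rfl⟩ := Finset.mem_image.mp hq
    simp only at h ⊢
    rw [φ.functional a ha b hb h]
  bot_mem := by
    obtain ⟨d, hd⟩ := φ.bot_mem
    exact ⟨f d, Finset.mem_image.mpr ⟨(⊥, d), hd, rfl⟩⟩

/-- The application of `f` on `φ`: the minimization of the pointwise image. -/
noncomputable def appF (f : D → D') (φ : BorderFun α D) : BorderFun α D' :=
  (φ.map f).minimize

/-- The product of two border functions. -/
noncomputable def prod (φ₁ : BorderFun α D₁) (φ₂ : BorderFun α D₂) :
    BorderFun α (D₁ × D₂) where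
  graph := (φ₁.dom ∪ φ₂.dom).image (fun σ => (σ, (φ₁.leVal σ, φ₂.leVal σ)))
  functional := by
    intro p hp q hq h
    obtain ⟨a, ha, rfl⟩ := Finset.mem_image.mp hp
    obtain ⟨b, hb, rfl⟩ := Finset.mem_image.mp hq
    simp only at h ⊢
    subst h
    rfl
  bot_mem := by
    obtain ⟨d, hd⟩ := φ₁.bot_mem
    exact ⟨_, Finset.mem_image.mpr ⟨⊥,
      Finset.mem_union_left _ (Finset.mem_image.mpr ⟨(⊥, d), hd, rfl⟩), rfl⟩⟩

/-- The constant border function with the single border `(⊥, d)`. -/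
def botFun (d : D) : BorderFun α D :=
  ⟨{(⊥, d)}, by
    intro p hp q hq _
    simp only [Finset.mem_singleton] at hp hq
    rw [hp, hq], ⟨d, by simp⟩⟩

end BorderFun

/-- An acceptor: a flat list of states, each consisting of a set of relative
ε-transitions and a border function giving relative symbol transitions
(`none` = `#`, no transition). State `i` (1-indexed) is `states[i-1]`;
the initial state is `1` and the accepting state is `length + 1`. -/
abbrev Acceptor (α : Type*) [LinearOrder α] [OrderBot α] :=
  List (Finset ℤ × BorderFun α (Option ℤ))

namespace Acceptor

variable {α : Type*} [LinearOrder α] [OrderBot α]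

/-- The committing condition: no transitions to states `< 2` or `> n + 1`. -/
def Valid (M : Acceptor α) : Prop :=
  ∀ i (hi : i < M.length),
    (∀ j ∈ (M.get ⟨i, hi⟩).1,
        2 ≤ (i + 1 : ℤ) + j ∧ (i + 1 : ℤ) + j ≤ (M.length : ℤ) + 1) ∧
    (∀ p ∈ (M.get ⟨i, hi⟩).2.graph, ∀ j : ℤ, p.2 = some j →
        2 ≤ (i + 1 : ℤ) + j ∧ (i + 1 : ℤ) + j ≤ (M.length : ℤ) + 1)

/-- The transition relation on configurations `(state, word read so far)`. -/
inductive Step (M : Acceptor α) : ℤ × List α → ℤ × List α → Prop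
  | eps {i : ℕ} (hi : i < M.length) {j : ℤ} (hj : j ∈ (M.get ⟨i, hi⟩).1) (w : List α) :
      Step M ((i : ℤ) + 1, w) ((i : ℤ) + 1 + j, w)
  | symb {i : ℕ} (hi : i < M.length) {σ : α} {j : ℤ}
      (hj : (M.get ⟨i, hi⟩).2.leVal σ = some j) (w : List α) :
      Step M ((i : ℤ) + 1, w) ((i : ℤ) + 1 + j, w ++ [σ])

/-- `M` accepts `w` iff `(1, ε) ⊢* (‖M‖ + 1, w)`. -/
def Accepts (M : Acceptor α) (w : List α) : Prop :=
  Relation.ReflTransGen (Step M) (1, []) ((M.length : ℤ) + 1, w)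

/-- The language of an acceptor. -/
def Lang (M : Acceptor α) : Set (List α) := {w | M.Accepts w}

/-- The acceptor `A_ε`, which is the empty sequence. -/
def epsA : Acceptor α := []

/-- The one-state acceptor `A_∅` accepting nothing. -/
def emptyA : Acceptor α := [(∅, BorderFun.botFun none)]

/-- `M{i →^ε j}`: add the relative ε-transition `j - i` to state `i`. -/
def addEps (M : Acceptor α) (i j : ℤ) : Acceptor α :=
  M.modify (i - 1).toNat (fun p => (insert (j - i) p.1, p.2))

/-- The union `M₁ | M₂ := (M₁ ∘ A_∅ ∘ M₂){1 →^ε ‖M₁‖+2, ‖M₁‖+1 →^ε ‖M₁‖+‖M₂‖+2}`. -/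
def union (M₁ M₂ : Acceptor α) : Acceptor α :=
  addEps (addEps (M₁ ++ emptyA ++ M₂) 1 ((M₁.length : ℤ) + 2))
    ((M₁.length : ℤ) + 1) ((M₁.length : ℤ) + (M₂.length : ℤ) + 2)

/-- The Kleene star
`M* := (A_∅ ∘ M ∘ A_∅){1 →^ε 2, 2 →^ε ‖M‖+3, ‖M‖+2 →^ε 2}`. -/
def star (M : Acceptor α) : Acceptor α :=
  addEps (addEps (addEps (emptyA ++ M ++ emptyA) 1 2) 2 ((M.length : ℤ) + 3))
    ((M.length : ℤ) + 2) 2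

/-- The non-empty repetition
`M⁺ := (A_∅ ∘ M ∘ A_∅){1 →^ε 2, ‖M‖+2 →^ε 2, ‖M‖+2 →^ε ‖M‖+3}`. -/
def plus (M : Acceptor α) : Acceptor α :=
  addEps (addEps (addEps (emptyA ++ M ++ emptyA) 1 2) ((M.length : ℤ) + 2) 2)
    ((M.length : ℤ) + 2) ((M.length : ℤ) + 3)

/-- The optional acceptor `M? := M{1 →^ε ‖M‖+1}`. -/
def opt (M : Acceptor α) : Acceptor α := addEps M 1 ((M.length : ℤ) + 1)

end Acceptor

/-!
Unfolding the three `addEps` and the two concatenations, a step of `M*` is either a step of `M`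
shifted by one state, or one of the ε-moves `1 → 2`, `2 → ‖M‖+3`, `‖M‖+2 → 2`. Looping
`2 →* ‖M‖+2 → 2` once per factor accepts every concatenation of words of `L(M)`. Conversely,
since `M` is committing, a run of `M` from state `1` never comes back to `1` and never leaves
`[1, ‖M‖+1]`; hence every configuration of `M*` reachable in a state `2 ≤ p ≤ ‖M‖+2` has read a
word `w₀ ++ v` with `w₀ ∈ L(M)∗` and `v` read by a run of `M` from `1` to `p - 1`.
-/

open Relation Computability

namespace BorderFun

variable {α : Type*} [LinearOrder α] [OrderBot α] {D : Type*}

lemma leVal_mem (φ : BorderFun α D) (σ : α) : (φ.maxLe σ, φ.leVal σ) ∈ φ.graph :=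
  Classical.choose_spec (φ.exists_leVal σ)

@[simp]
lemma leVal_botFun (d : D) (σ : α) : (botFun d : BorderFun α D).leVal σ = d := by
  have h := leVal_mem (botFun d : BorderFun α D) σ
  simp only [botFun, Finset.mem_singleton, Prod.mk.injEq] at h
  exact h.2

end BorderFun

namespace Acceptor

variable {α : Type*} [LinearOrder α] [OrderBot α]

def Moves (x : Finset ℤ × BorderFun α (Option ℤ)) (j : ℤ) (u v : List α) : Prop :=
  j ∈ x.1 ∧ v = u ∨ ∃ σ, x.2.leVal σ = some j ∧ v = u ++ [σ]

lemma moves_insert {s : Finset ℤ} {φ : BorderFun α (Option ℤ)} {d j : ℤ} {u v : List α} :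
    Moves (insert d s, φ) j u v ↔ Moves (s, φ) j u v ∨ j = d ∧ v = u := by
  simp only [Moves, Finset.mem_insert, or_and_right]
  grind

lemma step_iff {M : Acceptor α} {p q : ℤ} {u v : List α} :
    Step M (p, u) (q, v) ↔ ∃ i : ℕ, p = i + 1 ∧ ∃ x ∈ M[i]?, Moves x (q - p) u v := by
  constructor
  · rintro (⟨hi, hj⟩ | ⟨hi, hj⟩)
    · exact ⟨_, rfl, _, List.getElem?_eq_getElem hi, .inl ⟨by simpa using hj, rfl⟩⟩
    · exact ⟨_, rfl, _, List.getElem?_eq_getElem hi, .inr ⟨_, by simpa using hj, rfl⟩⟩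
  · rintro ⟨i, rfl, x, hx, hmove⟩
    obtain ⟨hi, rfl⟩ := List.getElem?_eq_some_iff.mp hx
    rcases hmove with ⟨hj, rfl⟩ | ⟨σ, hσ, rfl⟩
    · simpa using Step.eps hi hj _
    · simpa using Step.symb hi hσ _

lemma step_append_left_iff {M : Acceptor α} {p q : ℤ} {x u v : List α} :
    Step M (p, x ++ u) (q, v) ↔ ∃ v', v = x ++ v' ∧ Step M (p, u) (q, v') := by
  simp only [step_iff, Moves]
  constructor
  · rintro ⟨i, rfl, y, hy, ⟨hj, rfl⟩ | ⟨σ, hσ, rfl⟩⟩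
    · exact ⟨u, rfl, i, rfl, y, hy, .inl ⟨hj, rfl⟩⟩
    · exact ⟨u ++ [σ], by simp, i, rfl, y, hy, .inr ⟨σ, hσ, rfl⟩⟩
  · rintro ⟨v', rfl, i, rfl, y, hy, ⟨hj, rfl⟩ | ⟨σ, hσ, rfl⟩⟩
    · exact ⟨i, rfl, y, hy, .inl ⟨hj, rfl⟩⟩
    · exact ⟨i, rfl, y, hy, .inr ⟨σ, hσ, by simp⟩⟩

lemma Step.append_left {M : Acceptor α} {p q : ℤ} {u v : List α} (x : List α)
    (hs : Step M (p, u) (q, v)) : Step M (p, x ++ u) (q, x ++ v) :=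
  step_append_left_iff.mpr ⟨v, rfl, hs⟩

lemma Step.source_bounds {M : Acceptor α} {p : ℤ} {u : List α} {c : ℤ × List α}
    (hs : Step M (p, u) c) : 1 ≤ p ∧ p ≤ M.length := by
  obtain ⟨i, rfl, x, hx, -⟩ := step_iff.mp hs
  have := (List.getElem?_eq_some_iff.mp hx).1
  omega

lemma Valid.target_bounds {M : Acceptor α} (hM : Valid M) {c : ℤ × List α} {q : ℤ} {v : List α}
    (hs : Step M c (q, v)) : 2 ≤ q ∧ q ≤ M.length + 1 := by
  cases hs with
  | eps hi hj => exact (hM _ hi).1 _ hj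
  | @symb i hi σ j hj =>
    have hmem := BorderFun.leVal_mem (M.get ⟨i, hi⟩).2 σ
    rw [hj] at hmem
    exact (hM _ hi).2 _ hmem _ rfl

lemma Valid.reachable_state {M : Acceptor α} (hM : Valid M) {u v : List α} {p : ℤ}
    (hrun : ReflTransGen (Step M) (1, u) (p, v)) :
    p = 1 ∧ v = u ∨ 2 ≤ p ∧ p ≤ M.length + 1 := by
  rcases ReflTransGen.cases_tail hrun with h | ⟨c, -, hs⟩
  · simp_all
  · exact .inr (hM.target_bounds hs)

lemma not_step_emptyA {c c' : ℤ × List α} : ¬ Step (emptyA : Acceptor α) c c' := by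
  obtain ⟨p, u⟩ := c
  obtain ⟨q, v⟩ := c'
  simp [step_iff, Moves, emptyA, List.getElem?_cons]

@[simp]
lemma length_emptyA : (emptyA : Acceptor α).length = 1 := rfl

@[simp]
lemma length_addEps (M : Acceptor α) (i j : ℤ) : (addEps M i j).length = M.length :=
  List.length_modify ..

lemma step_append {A B : Acceptor α} {p q : ℤ} {u v : List α} :
    Step (A ++ B) (p, u) (q, v) ↔
      Step A (p, u) (q, v) ∨ Step B (p - A.length, u) (q - A.length, v) := by
  simp only [step_iff, List.getElem?_append]
  constructor
  · rintro ⟨i, rfl, x, hx, hmove⟩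
    split_ifs at hx with hi
    · exact .inl ⟨i, rfl, x, hx, hmove⟩
    · refine .inr ⟨i - A.length, by omega, x, hx, ?_⟩
      convert hmove using 1
      ring
  · rintro (⟨i, rfl, x, hx, hmove⟩ | ⟨i, hi, x, hx, hmove⟩)
    · exact ⟨i, rfl, x, by rwa [if_pos (List.getElem?_eq_some_iff.mp hx).1], hmove⟩
    · refine ⟨i + A.length, by omega, x, by rwa [if_neg (by omega), Nat.add_sub_cancel], ?_⟩
      convert hmove using 1
      ring

lemma step_addEps {M : Acceptor α} {i j p q : ℤ} {u v : List α} (hi : 1 ≤ i) :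
    Step (addEps M i j) (p, u) (q, v) ↔
      Step M (p, u) (q, v) ∨ p = i ∧ i ≤ M.length ∧ q = j ∧ v = u := by
  simp only [addEps, step_iff, List.getElem?_modify]
  constructor
  · rintro ⟨k, rfl, x, hx, hmove⟩
    obtain ⟨y, hy, rfl⟩ := Option.map_eq_some_iff.mp hx
    split_ifs at hmove with hk
    · rcases moves_insert.mp hmove with hmove | ⟨hq, rfl⟩
      · exact .inl ⟨k, rfl, y, hy, hmove⟩
      · have := (List.getElem?_eq_some_iff.mp hy).1
        exact .inr ⟨by omega, by omega, by omega, rfl⟩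
    · exact .inl ⟨k, rfl, y, hy, hmove⟩
  · rintro (⟨k, rfl, y, hy, hmove⟩ | ⟨rfl, hle, rfl, rfl⟩)
    · refine ⟨k, rfl, _, Option.mem_map_of_mem _ hy, ?_⟩
      split_ifs
      exacts [moves_insert.mpr (.inl hmove), hmove]
    · obtain ⟨y, hy⟩ : ∃ y, M[(p - 1).toNat]? = some y :=
        Option.isSome_iff_exists.mp (by simp; omega)
      refine ⟨(p - 1).toNat, by omega, _, Option.mem_map_of_mem _ hy, ?_⟩
      rw [if_pos rfl]
      exact moves_insert.mpr (.inr ⟨by ring, rfl⟩)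

lemma step_star_iff {M : Acceptor α} {p q : ℤ} {u v : List α} :
    Step (star M) (p, u) (q, v) ↔
      Step M (p - 1, u) (q - 1, v) ∨
        v = u ∧ (p = 1 ∧ q = 2 ∨ p = 2 ∧ q = M.length + 3 ∨ p = M.length + 2 ∧ q = 2) := by
  simp only [star, step_addEps (show (1 : ℤ) ≤ 1 by norm_num),
    step_addEps (show (1 : ℤ) ≤ 2 by norm_num), step_addEps (show (1 : ℤ) ≤ M.length + 2 by omega),
    step_append, not_step_emptyA, or_false, false_or, length_addEps, List.length_append,
    length_emptyA, Nat.cast_add, Nat.cast_one]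
  grind

@[simp]
lemma length_star (M : Acceptor α) : (star M).length = M.length + 2 := by
  simp [star, emptyA]

lemma run_star_of_run {M : Acceptor α} {p q : ℤ} {u v : List α} (x : List α)
    (hrun : ReflTransGen (Step M) (p, u) (q, v)) :
    ReflTransGen (Step (star M)) (p + 1, x ++ u) (q + 1, x ++ v) := by
  refine hrun.lift (fun c => (c.1 + 1, x ++ c.2)) fun c c' hs => ?_
  exact step_star_iff.mpr (.inl (by simpa using hs.append_left x))

variable (M : Acceptor α)

def language : Language α := M.Lang

lemma mem_language_iff {v : List α} :
    v ∈ M.language ↔ ReflTransGen (Step M) (1, []) (M.length + 1, v) := Iff.rfl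

lemma mem_language_star_iff {w : List α} :
    w ∈ (star M).language ↔ ReflTransGen (Step (star M)) (1, []) (M.length + 3, w) := by
  have hlen : ((star M).length : ℤ) + 1 = M.length + 3 := by simp; ring
  rw [← hlen]
  rfl

lemma run_star_of_mem_language {v : List α} (hv : v ∈ M.language) (u : List α) :
    ReflTransGen (Step (star M)) (2, u) (2, u ++ v) := by
  have hrun : ReflTransGen (Step (star M)) (1 + 1, u ++ []) (M.length + 1 + 1, u ++ v) :=
    run_star_of_run u hv
  have hloop : Step (star M) (M.length + 1 + 1, u ++ v) (2, u ++ v) :=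
    step_star_iff.mpr (.inr ⟨rfl, by omega⟩)
  simpa using hrun.tail hloop

lemma run_star_of_mem_kstar {w : List α} (hw : w ∈ M.language∗) (u : List α) :
    ReflTransGen (Step (star M)) (2, u) (2, u ++ w) := by
  obtain ⟨ws, rfl, hws⟩ := Language.mem_kstar.mp hw
  clear hw
  induction ws generalizing u with
  | nil => simpa using ReflTransGen.refl
  | cons v ws ih =>
    simpa using (run_star_of_mem_language M (hws v (by simp)) u).trans
      (ih (u ++ v) fun y hy => hws y (by simp [hy]))

lemma mem_language_star_of_mem_kstar {w : List α} (hw : w ∈ M.language∗) :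
    w ∈ (star M).language := by
  have hstart : Step (star M) (1, []) (2, []) := step_star_iff.mpr (.inr ⟨rfl, by omega⟩)
  have hexit : Step (star M) (2, w) (M.length + 3, w) := step_star_iff.mpr (.inr ⟨rfl, by omega⟩)
  have := ((ReflTransGen.single hstart).trans (run_star_of_mem_kstar M hw [])).tail hexit
  rwa [mem_language_star_iff]

def StarInvariant : ℤ × List α → Prop
  | (p, w) => p = 1 ∧ w = [] ∨ p = M.length + 3 ∧ w ∈ M.language∗ ∨
      ∃ w₀ ∈ M.language∗, ∃ v, w = w₀ ++ v ∧ ReflTransGen (Step M) (1, []) (p - 1, v)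

variable {M}

lemma StarInvariant.step (hM : Valid M) {c c' : ℤ × List α} (hc : StarInvariant M c)
    (hs : Step (star M) c c') : StarInvariant M c' := by
  obtain ⟨p, w⟩ := c
  obtain ⟨q, w'⟩ := c'
  rcases step_star_iff.mp hs with hsM | ⟨rfl, ⟨rfl, rfl⟩ | ⟨rfl, rfl⟩ | ⟨rfl, rfl⟩⟩
  · have hp := hsM.source_bounds
    rcases hc with ⟨rfl, -⟩ | ⟨rfl, -⟩ | ⟨w₀, hw₀, v, rfl, hrun⟩
    · omega
    · omega
    obtain ⟨v', rfl, hsv⟩ := step_append_left_iff.mp hsM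
    exact .inr (.inr ⟨w₀, hw₀, v', rfl, hrun.tail hsv⟩)
  · rcases hc with ⟨-, rfl⟩ | ⟨h, -⟩ | ⟨w₀, -, v, -, hrun⟩
    · exact .inr (.inr ⟨[], Language.nil_mem_kstar _, [], rfl, by simpa using ReflTransGen.refl⟩)
    · omega
    · have := hM.reachable_state hrun
      omega
  · rcases hc with ⟨h, -⟩ | ⟨h, -⟩ | ⟨w₀, hw₀, v, rfl, hrun⟩
    · omega
    · omega
    rcases hM.reachable_state hrun with ⟨-, rfl⟩ | h
    · exact .inr (.inl ⟨rfl, by simpa using hw₀⟩)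
    · omega
  · rcases hc with ⟨h, -⟩ | ⟨h, -⟩ | ⟨w₀, hw₀, v, rfl, hrun⟩
    · omega
    · omega
    have hv : v ∈ M.language := by
      rwa [mem_language_iff, ← show (M.length : ℤ) + 2 - 1 = M.length + 1 by ring]
    refine .inr (.inr ⟨w₀ ++ v, ?_, [], by simp, by simpa using ReflTransGen.refl⟩)
    exact kstar_mul_le_kstar (α := Language α) (Language.append_mem_mul hw₀ hv)

lemma starInvariant_of_run (hM : Valid M) {c : ℤ × List α}
    (hrun : ReflTransGen (Step (star M)) (1, []) c) : StarInvariant M c := by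
  induction hrun with
  | refl => exact .inl ⟨rfl, rfl⟩
  | tail _ hs ih => exact ih.step hM hs

lemma mem_kstar_of_mem_language_star (hM : Valid M) {w : List α} (hw : w ∈ (star M).language) :
    w ∈ M.language∗ := by
  rcases starInvariant_of_run hM ((mem_language_star_iff M).mp hw) with
    ⟨h, -⟩ | ⟨-, hw⟩ | ⟨w₀, -, v, -, hrun⟩
  · omega
  · exact hw
  · have := hM.reachable_state hrun
    omega

theorem language_star (hM : Valid M) : (star M).language = M.language∗ :=
  Set.ext fun _ => ⟨mem_kstar_of_mem_language_star hM, mem_language_star_of_mem_kstar M⟩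

end Acceptor

/-- `w ∈ L(A*)` iff `w` is a concatenation `w₁⋯w_k` (`k ≥ 0`) of
words `w₁, …, w_k ∈ L(A)`. -/
theorem star_lang {α : Type*} [LinearOrder α] [OrderBot α]
    (M : Acceptor α) (h : Acceptor.Valid M) (w : List α) :
    w ∈ Acceptor.Lang (Acceptor.star M) ↔
      ∃ ws : List (List α), (∀ u ∈ ws, u ∈ Acceptor.Lang M) ∧ w = ws.flatten := by
  change w ∈ (Acceptor.star M).language ↔ _
  rw [Acceptor.language_star h, Language.mem_kstar]
  exact exists_congr fun _ => and_comm
end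

section
/- In the subset construction for a classifier C, for every word w let R_w = { r | (1,ε) ⊢* (r, w) in C }; then for the determinized classifier C_det: if R_w ≠ ∅ then C_det reaches exactly the state H(R_w) after reading w (where H is the map from discovered subsets to state indices), and its token label equals CLASS(R_w); if R_w = ∅ then C_det reaches no state after reading w. -/
/-- A classifier: a flat list of states, each with relative ε-transitions,
a border function giving relative symbol transitions (`none` = `#`), and a
token class. State `1` carries the error class `t₁`. -/
abbrev Classifier (α : Type*) [LinearOrder α] [OrderBot α] (T : Type*) :=
  List (Finset ℤ × BorderFun α (Option ℤ) × T)

namespace Classifier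

variable {α : Type*} [LinearOrder α] [OrderBot α] {T : Type*}

/-- `TokOf C i t`: state `i` (1-indexed) exists and carries token `t`. -/
def TokOf (C : Classifier α T) (i : ℤ) (t : T) : Prop :=
  ∃ h : (i - 1).toNat < C.length, 1 ≤ i ∧ (C.get ⟨(i - 1).toNat, h⟩).2.2 = t

/-- An ε-transition from state `a` to state `b`. -/
def EpsStep (C : Classifier α T) (a b : ℤ) : Prop :=
  ∃ h : (a - 1).toNat < C.length, 1 ≤ a ∧ b - a ∈ (C.get ⟨(a - 1).toNat, h⟩).1

/-- A symbol transition on `σ` from state `a` to state `b`. -/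
def SymStep (C : Classifier α T) (σ : α) (a b : ℤ) : Prop :=
  ∃ h : (a - 1).toNat < C.length,
    1 ≤ a ∧ (C.get ⟨(a - 1).toNat, h⟩).2.1.leVal σ = some (b - a)

/-- The transition relation on configurations `(state, word read so far)`. -/
def Step (C : Classifier α T) : ℤ × List α → ℤ × List α → Prop := fun p q =>
  (EpsStep C p.1 q.1 ∧ q.2 = p.2) ∨ (∃ σ, SymStep C σ p.1 q.1 ∧ q.2 = p.2 ++ [σ])

/-- `Reach C i w`: `(1, ε) ⊢* (i, w)`. -/
def Reach (C : Classifier α T) (i : ℤ) (w : List α) : Prop :=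
  Relation.ReflTransGen (Step C) (1, []) (i, w)

/-- A classifier is well-formed if no state reachable on the empty word carries a
token different from the error class `t₁`. -/
def WellFormed (C : Classifier α T) : Prop :=
  ∀ i t t₁, Reach C i [] → TokOf C i t → TokOf C 1 t₁ → t = t₁

/-- `ClassifiesAs C w w' t`: the classification of `w` by `C` is the pair `(w', t)`:
either no prefix of `w` reaches a non-error state, and then `w' = ε` and `t = t₁`;
or `w'` is the maximal prefix of `w` reaching a state with non-error token, and `t`
is the token of the largest such state. -/
def ClassifiesAs (C : Classifier α T) (w w' : List α) (t : T) : Prop :=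
  (w' = [] ∧ TokOf C 1 t ∧
    ∀ p i ti t1, p <+: w → Reach C i p → TokOf C i ti → TokOf C 1 t1 → ti = t1) ∨
  (w' <+: w ∧ ∃ i t1, TokOf C 1 t1 ∧ Reach C i w' ∧ TokOf C i t ∧ t ≠ t1 ∧
    (∀ j tj, Reach C j w' → TokOf C j tj → tj ≠ t1 → j ≤ i) ∧
    (∀ p j tj t1', p <+: w → w'.length < p.length →
      Reach C j p → TokOf C j tj → TokOf C 1 t1' → tj = t1'))

/-- The ε-closure of a set of states. -/
def Clos (C : Classifier α T) (S : Set ℤ) : Set ℤ :=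
  {j | ∃ i ∈ S, Relation.ReflTransGen (EpsStep C) i j}

/-- `ClassOf C S t`: `t = CLASS(S)`, i.e. `t = t₁` if every state of `S` carries the
error token, and otherwise `t` is the token of the maximal state of `S` whose token
differs from `t₁`. -/
def ClassOf (C : Classifier α T) (S : Set ℤ) (t : T) : Prop :=
  ((∀ i ∈ S, ∀ ti t1, TokOf C i ti → TokOf C 1 t1 → ti = t1) ∧ TokOf C 1 t) ∨
  (∃ i ∈ S, TokOf C i t ∧ (∀ t1, TokOf C 1 t1 → t ≠ t1) ∧
    ∀ j ∈ S, ∀ tj t1, TokOf C j tj → TokOf C 1 t1 → tj ≠ t1 → j ≤ i)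

/-- The set of successor states of `S` on symbol `σ`. -/
def NextSet (C : Classifier α T) (S : Set ℤ) (σ : α) : Set ℤ :=
  {b | ∃ a ∈ S, SymStep C σ a b}

/-- `IsDeterminization C Cd S`: `Cd` is the deterministic classifier produced from `C`
by the subset construction, where `S k` is the subset of states of `C` associated with
state `k` of `Cd` (so `H` is the inverse of `S`):
`S 1 = CLOS({1})`; `S` is injective on states; `Cd` has no ε-transitions; the token
of state `k` of `Cd` is `CLASS(S k)`; and the transition of state `k` on `σ` is `#`
if the successor set is empty, and otherwise leads to the state associated with the
ε-closure of the successor set. -/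
def IsDeterminization (C Cd : Classifier α T) (S : ℕ → Set ℤ) : Prop :=
  1 ≤ Cd.length ∧
  S 1 = Clos C {1} ∧
  (∀ i j, 1 ≤ i → i ≤ Cd.length → 1 ≤ j → j ≤ Cd.length → S i = S j → i = j) ∧
  (∀ i (h : i < Cd.length), (Cd.get ⟨i, h⟩).1 = ∅) ∧
  (∀ i (h : i < Cd.length), ClassOf C (S (i + 1)) (Cd.get ⟨i, h⟩).2.2) ∧
  (∀ i (h : i < Cd.length) (σ : α),
    (NextSet C (S (i + 1)) σ = ∅ → (Cd.get ⟨i, h⟩).2.1.leVal σ = none) ∧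
    (NextSet C (S (i + 1)) σ ≠ ∅ →
      ∃ k : ℕ, 1 ≤ k ∧ k ≤ Cd.length ∧ S k = Clos C (NextSet C (S (i + 1)) σ) ∧
        (Cd.get ⟨i, h⟩).2.1.leVal σ = some ((k : ℤ) - ((i : ℤ) + 1))))

end Classifier

/-!
By induction on `w` from the right. The set of states of `C` reachable on `w ++ [σ]` is the
ε-closure of the `σ`-successors of the set reachable on `w`, which is exactly the subset that
the construction attaches to the `σ`-successor of the current state of `C_det`. Since `C_det`
has no ε-transitions and each state has a single `σ`-transition, it reads every symbol by
exactly one transition, so the state it reaches is unique.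
-/

namespace Classifier

open Relation

variable {α : Type*} [LinearOrder α] [OrderBot α] {T : Type*}

section Reach

variable {C : Classifier α T}

theorem Reach.of_reflTransGen_epsStep {i j : ℤ} {w : List α} (h : Reach C i w)
    (he : ReflTransGen (EpsStep C) i j) : Reach C j w := by
  induction he with
  | refl => exact h
  | tail _ hstep ih => exact ih.tail (Or.inl ⟨hstep, rfl⟩)

theorem reach_nil_iff {i : ℤ} : Reach C i [] ↔ ReflTransGen (EpsStep C) 1 i := by
  refine ⟨fun h => ?_, Reach.of_reflTransGen_epsStep .refl⟩
  suffices ∀ q, ReflTransGen (Step C) (1, []) q → q.2 = [] → ReflTransGen (EpsStep C) 1 q.1 from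
    this _ h rfl
  intro q hq
  induction hq with
  | refl => exact fun _ => .refl
  | tail _ hstep ih =>
    intro hnil
    rcases hstep with ⟨he, hw⟩ | ⟨σ, -, hw⟩
    · exact (ih (hw.symm.trans hnil)).tail he
    · simp [hnil] at hw

theorem reach_append_singleton_iff {r : ℤ} {w : List α} {σ : α} :
    Reach C r (w ++ [σ]) ↔
      ∃ a b, Reach C a w ∧ SymStep C σ a b ∧ ReflTransGen (EpsStep C) b r := by
  refine ⟨fun h => ?_, fun ⟨a, b, ha, hab, hb⟩ =>
    Reach.of_reflTransGen_epsStep (ha.tail (Or.inr ⟨σ, hab, rfl⟩)) hb⟩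
  suffices ∀ q, ReflTransGen (Step C) (1, []) q → q.2 = w ++ [σ] →
      ∃ a b, Reach C a w ∧ SymStep C σ a b ∧ ReflTransGen (EpsStep C) b q.1 from
    this _ h rfl
  intro q hq
  induction hq with
  | refl => simp
  | @tail p q hp hstep ih =>
    intro hq
    rcases hstep with ⟨he, hw⟩ | ⟨τ, hs, hw⟩
    · obtain ⟨a, b, ha, hab, hb⟩ := ih (hw.symm.trans hq)
      exact ⟨a, b, ha, hab, hb.tail he⟩
    · obtain ⟨hpw, rfl⟩ : p.2 = w ∧ τ = σ := by simpa using hw.symm.trans hq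
      exact ⟨p.1, q.1, hpw ▸ hp, hs, .refl⟩

theorem setOf_reach_nil : {r | Reach C r []} = Clos C {1} := by
  ext r
  simp [Clos, reach_nil_iff]

theorem setOf_reach_append_singleton (w : List α) (σ : α) :
    {r | Reach C r (w ++ [σ])} = Clos C (NextSet C {r | Reach C r w} σ) := by
  ext r
  simp only [Set.mem_ofPred_eq, reach_append_singleton_iff, Clos, NextSet]
  constructor
  · rintro ⟨a, b, ha, hab, hb⟩
    exact ⟨b, ⟨a, ha, hab⟩, hb⟩
  · rintro ⟨b, ⟨a, ha, hab⟩, hb⟩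
    exact ⟨a, b, ha, hab, hb⟩

theorem clos_eq_empty_iff {X : Set ℤ} : Clos C X = ∅ ↔ X = ∅ := by
  simp only [Set.eq_empty_iff_forall_notMem, Clos, Set.mem_ofPred_eq]
  exact ⟨fun h i hi => h i ⟨i, hi, .refl⟩, fun h j ⟨i, hi, _⟩ => h i hi⟩

theorem nextSet_empty (σ : α) : NextSet C ∅ σ = ∅ := by
  simp [NextSet]

end Reach

section NoEps

variable {Cd : Classifier α T}

theorem reflTransGen_epsStep_iff_of_not_epsStep (hε : ∀ a b, ¬ EpsStep Cd a b) {a b : ℤ} :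
    ReflTransGen (EpsStep Cd) a b ↔ a = b := by
  rw [ReflTransGen.cases_head_iff]
  simp [hε]

theorem reach_nil_iff_of_not_epsStep (hε : ∀ a b, ¬ EpsStep Cd a b) {j : ℤ} :
    Reach Cd j [] ↔ j = 1 := by
  rw [reach_nil_iff, reflTransGen_epsStep_iff_of_not_epsStep hε, eq_comm]

theorem reach_append_singleton_iff_of_not_epsStep (hε : ∀ a b, ¬ EpsStep Cd a b) {j : ℤ}
    {w : List α} {σ : α} : Reach Cd j (w ++ [σ]) ↔ ∃ a, Reach Cd a w ∧ SymStep Cd σ a j := by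
  simp [reach_append_singleton_iff, reflTransGen_epsStep_iff_of_not_epsStep hε]

end NoEps

def TracksReachSet (C Cd : Classifier α T) (S : ℕ → Set ℤ) (w : List α) : Prop :=
  ({r | Reach C r w}.Nonempty → ∃ k : ℕ, 1 ≤ k ∧ k ≤ Cd.length ∧
      S k = {r | Reach C r w} ∧ ∀ j, Reach Cd j w ↔ j = k) ∧
    ({r | Reach C r w} = ∅ → ∀ j, ¬ Reach Cd j w)

namespace IsDeterminization

variable {C Cd : Classifier α T} {S : ℕ → Set ℤ}

theorem not_epsStep (hd : IsDeterminization C Cd S) (a b : ℤ) : ¬ EpsStep Cd a b := by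
  rintro ⟨h, -, hmem⟩
  rw [hd.2.2.2.1 _ h] at hmem
  exact Finset.notMem_empty _ hmem

theorem classOf_of_tokOf (hd : IsDeterminization C Cd S) {k : ℕ} {t : T}
    (ht : TokOf Cd k t) : ClassOf C (S k) t := by
  obtain ⟨hlt, hk, rfl⟩ := ht
  convert hd.2.2.2.2.1 _ hlt using 2
  omega

theorem not_symStep (hd : IsDeterminization C Cd S) {k : ℕ} (hk : 1 ≤ k) {σ : α}
    (hN : NextSet C (S k) σ = ∅) (j : ℤ) : ¬ SymStep Cd σ k j := by
  rintro ⟨hlt, -, hval⟩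
  have hi : ((k : ℤ) - 1).toNat + 1 = k := by omega
  rw [(hd.2.2.2.2.2 _ hlt σ).1 (by rwa [hi])] at hval
  cases hval

theorem exists_symStep_iff (hd : IsDeterminization C Cd S) {k : ℕ} (hk : 1 ≤ k)
    (hkn : k ≤ Cd.length) {σ : α} (hN : NextSet C (S k) σ ≠ ∅) :
    ∃ k' : ℕ, 1 ≤ k' ∧ k' ≤ Cd.length ∧ S k' = Clos C (NextSet C (S k) σ) ∧
      ∀ j, SymStep Cd σ k j ↔ j = k' := by
  have hlt : ((k : ℤ) - 1).toNat < Cd.length := by omega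
  have hi : ((k : ℤ) - 1).toNat + 1 = k := by omega
  obtain ⟨k', hk'1, hk'n, hSk', hval⟩ := (hd.2.2.2.2.2 _ hlt σ).2 (by rwa [hi])
  refine ⟨k', hk'1, hk'n, by rwa [hi] at hSk', fun j => ⟨?_, ?_⟩⟩
  · rintro ⟨_, -, hj⟩
    rw [hval, Option.some_inj] at hj
    omega
  · rintro rfl
    exact ⟨hlt, by exact_mod_cast hk, by rw [hval]; congr 1; omega⟩

theorem tracksReachSet_nil (hd : IsDeterminization C Cd S) : TracksReachSet C Cd S [] := by
  refine ⟨fun _ => ⟨1, le_rfl, hd.1, ?_, ?_⟩, fun h => ?_⟩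
  · rw [hd.2.1, setOf_reach_nil]
  · simpa using fun j => reach_nil_iff_of_not_epsStep hd.not_epsStep (j := j)
  · exact absurd h (Set.nonempty_iff_ne_empty.1 ⟨1, .refl⟩)

theorem tracksReachSet_append_singleton (hd : IsDeterminization C Cd S) {w : List α}
    (h : TracksReachSet C Cd S w) (σ : α) : TracksReachSet C Cd S (w ++ [σ]) := by
  obtain ⟨hne, hempty⟩ := h
  simp only [TracksReachSet, setOf_reach_append_singleton,
    reach_append_singleton_iff_of_not_epsStep hd.not_epsStep]
  rcases Set.eq_empty_or_nonempty {r | Reach C r w} with hR | hR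
  · rw [hR, nextSet_empty, clos_eq_empty_iff.2 rfl]
    exact ⟨fun h => absurd h Set.not_nonempty_empty, fun _ j ⟨a, ha, _⟩ => hempty hR a ha⟩
  obtain ⟨k, hk, hkn, hSk, hreach⟩ := hne hR
  simp only [hreach, exists_eq_left, ← hSk]
  by_cases hN : NextSet C (S k) σ = ∅
  · rw [hN, clos_eq_empty_iff.2 rfl]
    exact ⟨fun h => absurd h Set.not_nonempty_empty, fun _ => hd.not_symStep hk hN⟩
  · exact ⟨fun _ => hd.exists_symStep_iff hk hkn hN,
      fun h => absurd (clos_eq_empty_iff.1 h) hN⟩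

theorem tracksReachSet (hd : IsDeterminization C Cd S) (w : List α) :
    TracksReachSet C Cd S w := by
  induction w using List.reverseRecOn with
  | nil => exact hd.tracksReachSet_nil
  | append_singleton w σ ih => exact hd.tracksReachSet_append_singleton ih σ

end IsDeterminization

end Classifier

theorem subset_construction_invariant_general {α : Type*} [LinearOrder α] [OrderBot α]
    {T : Type*} (C Cd : Classifier α T) (S : ℕ → Set ℤ)
    (hdet : Classifier.IsDeterminization C Cd S) (w : List α) :
    (({r | Classifier.Reach C r w} : Set ℤ).Nonempty →
      ∃ k : ℕ, 1 ≤ k ∧ k ≤ Cd.length ∧ S k = {r | Classifier.Reach C r w} ∧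
        Classifier.Reach Cd (k : ℤ) w ∧
        (∀ j : ℤ, Classifier.Reach Cd j w → j = (k : ℤ)) ∧
        (∀ t, Classifier.TokOf Cd (k : ℤ) t →
          Classifier.ClassOf C {r | Classifier.Reach C r w} t)) ∧
    (({r | Classifier.Reach C r w} : Set ℤ) = ∅ →
      ∀ j : ℤ, ¬ Classifier.Reach Cd j w) := by
  obtain ⟨hne, hempty⟩ := hdet.tracksReachSet w
  refine ⟨fun hR => ?_, hempty⟩
  obtain ⟨k, hk, hkn, hSk, hreach⟩ := hne hR
  exact ⟨k, hk, hkn, hSk, (hreach k).2 rfl, fun j => (hreach j).1,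
    fun t ht => hSk ▸ hdet.classOf_of_tokOf ht⟩

/-- With `R_w = { r | (1,ε) ⊢* (r,w) in C }`: if `R_w ≠ ∅` then the
determinized classifier reaches, after reading `w`, exactly one state, namely the
state `H(R_w)` associated with the subset `R_w`, and its token label is `CLASS(R_w)`;
if `R_w = ∅` then `C_det` reaches no state after reading `w`. -/
theorem subset_construction_invariant {α : Type*} [LinearOrder α] [OrderBot α]
    {T : Type*} (C Cd : Classifier α T) (S : ℕ → Set ℤ)
    (hC : C ≠ []) (hdet : Classifier.IsDeterminization C Cd S) (w : List α) :
    (({r | Classifier.Reach C r w} : Set ℤ).Nonempty →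
      ∃ k : ℕ, 1 ≤ k ∧ k ≤ Cd.length ∧ S k = {r | Classifier.Reach C r w} ∧
        Classifier.Reach Cd (k : ℤ) w ∧
        (∀ j : ℤ, Classifier.Reach Cd j w → j = (k : ℤ)) ∧
        (∀ t, Classifier.TokOf Cd (k : ℤ) t →
          Classifier.ClassOf C {r | Classifier.Reach C r w} t)) ∧
    (({r | Classifier.Reach C r w} : Set ℤ) = ∅ →
      ∀ j : ℤ, ¬ Classifier.Reach Cd j w) :=
  subset_construction_invariant_general C Cd S hdet w
end
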